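/- arXiv:2207.13244 — 5 statements merged into one kernel-verified Lean document; each statement's English description precedes it below -/
import Mathlib

section
/- For any bipartite graph G and any integer k ≥ 2, every two proper k-colorings of G are Kempe equivalent. -/
/-!
Fix a bipartition `p` of `G` and let `t` be the `k`-coloring that uses one color on each side.
If a proper coloring `c` differs from `t` at `v`, swap the colors `c v` and `t v` on the Kempe
chain of `v`. Along that chain the two colors alternate with the sides of the bipartition, so
every vertex of the chain disagrees with `t` before the swap, while `v` agrees with `t` after it.
The number of vertices where the coloring differs from `t` thus drops, so every proper coloring
is Kempe equivalent to `t`; Kempe changes are reversible, which joins any two colorings.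
-/

open SimpleGraph

variable {V : Type*}

/-- `c` is a proper `k`-coloring of the simple graph `G`. -/
def IsProperColoring (G : SimpleGraph V) (k : ℕ) (c : V → Fin k) : Prop :=
  ∀ ⦃u v : V⦄, G.Adj u v → c u ≠ c v

/-- The subgraph of `G` spanned by the vertices colored `i` or `j` (all other
vertices are isolated in this graph). -/
def twoColorSub (G : SimpleGraph V) {k : ℕ} (c : V → Fin k) (i j : Fin k) :
    SimpleGraph V where
  Adj u v := G.Adj u v ∧ (c u = i ∨ c u = j) ∧ (c v = i ∨ c v = j)
  symm := ⟨fun _ _ h => ⟨h.1.symm, h.2.2, h.2.1⟩⟩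
  loopless := ⟨fun v h => G.loopless.irrefl v h.1⟩

/-- A single Kempe change: swap the colors `i` and `j` on the connected component
of the `(i,j)`-colored subgraph containing the vertex `v₀`. -/
def KempeStep (G : SimpleGraph V) {k : ℕ} (c c' : V → Fin k) : Prop :=
  ∃ i j : Fin k, i ≠ j ∧ ∃ v₀ : V,
    (∀ v : V, (twoColorSub G c i j).Reachable v₀ v →
      (c v = i → c' v = j) ∧ (c v = j → c' v = i) ∧ (c v ≠ i → c v ≠ j → c' v = c v)) ∧
    (∀ v : V, ¬ (twoColorSub G c i j).Reachable v₀ v → c' v = c v)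

/-- Two colorings are Kempe equivalent if one is obtained from the other by a
finite sequence of Kempe changes. -/
def KempeEquiv (G : SimpleGraph V) {k : ℕ} (c c' : V → Fin k) : Prop :=
  Relation.ReflTransGen (fun a b : V → Fin k => KempeStep G a b) c c'

/-- `G` is obtained from a bipartite graph with parts `S` and `Sᶜ` by adding the
edges of `H`, each of which joins two vertices in the same part. -/
def IsBPlusE (G : SimpleGraph V) (S : Set V) (H : SimpleGraph V) : Prop :=
  H ≤ G ∧
  (∀ u v : V, G.Adj u v → ¬ H.Adj u v → (u ∈ S ↔ v ∉ S)) ∧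
  (∀ u v : V, H.Adj u v → (u ∈ S ↔ v ∈ S))

open Finset

variable {G : SimpleGraph V} {k : ℕ}

open Classical in
noncomputable def kempeSwap (G : SimpleGraph V) (c : V → Fin k) (i j : Fin k) (v₀ : V) :
    V → Fin k :=
  fun v => if (twoColorSub G c i j).Reachable v₀ v then Equiv.swap i j (c v) else c v

lemma swap_apply_mem_pair_iff {α : Type*} [DecidableEq α] {i j x : α} :
    (Equiv.swap i j x = i ∨ Equiv.swap i j x = j) ↔ (x = i ∨ x = j) := by
  simp only [Equiv.swap_apply_eq_iff, Equiv.swap_apply_left, Equiv.swap_apply_right, or_comm]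

lemma swap_apply_ne_of_not_mem_pair {α : Type*} [DecidableEq α] {i j x y : α} (hxy : x ≠ y)
    (h : ¬((x = i ∨ x = j) ∧ (y = i ∨ y = j))) : Equiv.swap i j x ≠ y := by
  by_cases hx : x = i ∨ x = j
  · rintro rfl
    exact h ⟨hx, swap_apply_mem_pair_iff.2 hx⟩
  · rwa [Equiv.swap_apply_of_ne_of_ne (fun h => hx (.inl h)) (fun h => hx (.inr h))]

lemma twoColorSub_kempeSwap (c : V → Fin k) (i j : Fin k) (v₀ : V) :
    twoColorSub G (kempeSwap G c i j v₀) i j = twoColorSub G c i j := by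
  have hpair : ∀ v, (kempeSwap G c i j v₀ v = i ∨ kempeSwap G c i j v₀ v = j) ↔
      (c v = i ∨ c v = j) := fun v => by
    unfold kempeSwap
    split_ifs
    exacts [swap_apply_mem_pair_iff, Iff.rfl]
  ext u v
  exact and_congr_right' (and_congr (hpair u) (hpair v))

lemma kempeSwap_kempeSwap (c : V → Fin k) (i j : Fin k) (v₀ : V) :
    kempeSwap G (kempeSwap G c i j v₀) i j v₀ = c := by
  funext v
  rw [kempeSwap, twoColorSub_kempeSwap]
  unfold kempeSwap
  split_ifs <;> simp

lemma kempeSwap_self (c : V → Fin k) (i j : Fin k) (v₀ : V) :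
    kempeSwap G c i j v₀ v₀ = Equiv.swap i j (c v₀) :=
  if_pos (Reachable.refl v₀)

lemma isProperColoring_kempeSwap {c : V → Fin k} (hc : IsProperColoring G k c)
    (i j : Fin k) (v₀ : V) : IsProperColoring G k (kempeSwap G c i j v₀) := by
  intro u w huw
  unfold kempeSwap
  split_ifs with hu hw hw
  · exact (Equiv.swap i j).injective.ne (hc huw)
  · exact swap_apply_ne_of_not_mem_pair (hc huw)
      fun h => hw (hu.trans (Adj.reachable ⟨huw, h⟩))
  · exact (swap_apply_ne_of_not_mem_pair (hc huw).symm
      fun h => hu (hw.trans (Adj.reachable ⟨huw.symm, h⟩))).symm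
  · exact hc huw

lemma kempeStep_iff {c c' : V → Fin k} :
    KempeStep G c c' ↔ ∃ i j, i ≠ j ∧ ∃ v₀, c' = kempeSwap G c i j v₀ := by
  have hswap : ∀ {i j x y : Fin k}, i ≠ j →
      ((x = i → y = j) ∧ (x = j → y = i) ∧ (x ≠ i → x ≠ j → y = x) ↔
        y = Equiv.swap i j x) := by
    intro i j x y hij
    rw [Equiv.swap_apply_def]
    split_ifs <;> grind
  refine exists₂_congr fun i j => and_congr_right fun hij => exists_congr fun v₀ => ?_
  simp only [funext_iff, kempeSwap, hswap hij]
  constructor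
  · rintro ⟨hin, hout⟩ v
    split_ifs with hv
    exacts [hin v hv, hout v hv]
  · intro h
    exact ⟨fun v hv => by rw [h v, if_pos hv], fun v hv => by rw [h v, if_neg hv]⟩

lemma KempeStep.symm {c c' : V → Fin k} (h : KempeStep G c c') : KempeStep G c' c := by
  obtain ⟨i, j, hij, v₀, rfl⟩ := kempeStep_iff.1 h
  exact kempeStep_iff.2 ⟨i, j, hij, v₀, (kempeSwap_kempeSwap c i j v₀).symm⟩

lemma KempeEquiv.symm {c c' : V → Fin k} (h : KempeEquiv G c c') : KempeEquiv G c' c :=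
  Relation.ReflTransGen.mono (fun _ _ => KempeStep.symm) _ _ (Relation.ReflTransGen.swap _ _ h)

lemma fin_two_eq_iff_of_ne {a b : Fin 2} (x : Fin 2) (hab : a ≠ b) : b = x ↔ a ≠ x := by
  revert a b x; decide

section Bipartite

variable (p : G.Coloring (Fin 2)) {t : V → Fin k}

lemma IsProperColoring.eq_ite_of_reachable {c : V → Fin k} (hc : IsProperColoring G k c)
    {i j : Fin k} {v₀ u : V} (hv₀ : c v₀ = i) (h : (twoColorSub G c i j).Reachable v₀ u) :
    c u = if p u = p v₀ then i else j := by
  rw [reachable_iff_reflTransGen] at h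
  induction h with
  | refl => simp [hv₀]
  | @tail b u _ hbu ih =>
    obtain ⟨hadj, hb, hu⟩ := hbu
    simp only [fin_two_eq_iff_of_ne (p v₀) (p.valid hadj)]
    have := hc hadj
    split_ifs at ih ⊢ <;> grind

lemma IsProperColoring.ne_of_reachable (ht : ∀ u w, t u = t w ↔ p u = p w) {c : V → Fin k}
    (hc : IsProperColoring G k c) {v₀ u : V} (hv₀ : c v₀ ≠ t v₀)
    (h : (twoColorSub G c (c v₀) (t v₀)).Reachable v₀ u) : c u ≠ t u := by
  rw [hc.eq_ite_of_reachable p rfl h]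
  split_ifs with hp
  · rwa [(ht u v₀).2 hp]
  · exact fun h' => hp ((ht u v₀).1 h'.symm)

variable [Fintype V]

lemma IsProperColoring.card_disagree_kempeSwap_lt (ht : ∀ u w, t u = t w ↔ p u = p w)
    {c : V → Fin k} (hc : IsProperColoring G k c) {v : V} (hv : c v ≠ t v) :
    #{u | kempeSwap G c (c v) (t v) v u ≠ t u} < #{u | c u ≠ t u} := by
  refine card_lt_card <|
    (ssubset_iff_of_subset fun u => ?_).2 ⟨v, by simpa, by simp [kempeSwap_self]⟩
  simp only [mem_filter, mem_univ, true_and]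
  refine mt fun hu => ?_
  unfold kempeSwap
  split_ifs with hr
  exacts [absurd hu (hc.ne_of_reachable p ht hv hr), hu]

theorem IsProperColoring.kempeEquiv_of_bipartition (ht : ∀ u w, t u = t w ↔ p u = p w)
    {c : V → Fin k} (hc : IsProperColoring G k c) :
    KempeEquiv G c t := by
  by_cases h : c = t
  · exact h ▸ .refl
  obtain ⟨v, hv⟩ := Function.ne_iff.1 h
  exact .head (kempeStep_iff.2 ⟨_, _, hv, v, rfl⟩)
    ((isProperColoring_kempeSwap hc _ _ v).kempeEquiv_of_bipartition ht)
termination_by #{u | c u ≠ t u}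
decreasing_by exact hc.card_disagree_kempeSwap_lt p ht hv

end Bipartite

/-- For any bipartite graph `G` and any integer `k ≥ 2`, every two
proper `k`-colorings of `G` are Kempe equivalent. -/
theorem kempe_equiv_of_bipartite {V : Type*} [Fintype V] (G : SimpleGraph V)
    (hbip : G.Colorable 2) (k : ℕ) (hk : 2 ≤ k)
    (c c' : V → Fin k) (hc : IsProperColoring G k c) (hc' : IsProperColoring G k c') :
    KempeEquiv G c c' := by
  obtain ⟨p⟩ := hbip
  have ht : ∀ u w, Fin.castLE hk (p u) = Fin.castLE hk (p w) ↔ p u = p w :=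
    fun _ _ => Fin.castLE_inj
  exact (hc.kempeEquiv_of_bipartition p ht).trans (hc'.kempeEquiv_of_bipartition p ht).symm
end

section
/- Let G be a graph with two proper k-colorings c and c'. Suppose that for every pair of colors i ≠ j, the subgraph of G induced under c by vertices with colors i or j is connected, and suppose that under c' there is some pair of colors i ≠ j such that the subgraph induced by vertices with colors i or j is disconnected (i.e., has a Kempe component not isomorphic to any Kempe component of c). Then c and c' are not Kempe equivalent. -/
open SimpleGraph

variable {V : Type*}

/-!
If every two-colored subgraph of `c` is connected, each Kempe change on `c` swaps two
colors on the whole graph, so it yields `σ ∘ c` for a permutation `σ` of the colors.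
Since `σ ∘ c` again has all two-colored subgraphs connected, every coloring Kempe
equivalent to `c` is of this form, and so has no disconnected two-colored subgraph.
-/

section KempeChange

variable {k : ℕ}

def TwoColorConnected (G : SimpleGraph V) (c : V → Fin k) : Prop :=
  ∀ i j : Fin k, i ≠ j → (G.induce {v : V | c v = i ∨ c v = j}).Connected

theorem TwoColorConnected.perm_comp {G : SimpleGraph V} {c : V → Fin k}
    (hc : TwoColorConnected G c) (σ : Equiv.Perm (Fin k)) :
    TwoColorConnected G (σ ∘ c) := by
  intro i j hij
  have hset : {v : V | σ (c v) = i ∨ σ (c v) = j}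
      = {v : V | c v = σ.symm i ∨ c v = σ.symm j} := by
    ext v
    simp only [Set.mem_ofPred_eq, ← Equiv.eq_symm_apply]
  change (G.induce {v : V | σ (c v) = i ∨ σ (c v) = j}).Connected
  rw [hset]
  exact hc _ _ (σ.symm.injective.ne hij)

theorem twoColorSub_reachable_of_preconnected {G : SimpleGraph V} {c : V → Fin k}
    {i j : Fin k} (h : (G.induce {v : V | c v = i ∨ c v = j}).Preconnected)
    {u v : V} (hu : c u = i ∨ c u = j) (hv : c v = i ∨ c v = j) :
    (twoColorSub G c i j).Reachable u v :=
  (h ⟨u, hu⟩ ⟨v, hv⟩).map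
    (⟨Subtype.val, fun {a b} hab => ⟨hab, a.2, b.2⟩⟩ : _ →g twoColorSub G c i j)

theorem eq_of_twoColorSub_reachable {G : SimpleGraph V} {c : V → Fin k} {i j : Fin k}
    {u v : V} (hu : c u ≠ i ∧ c u ≠ j) (huv : (twoColorSub G c i j).Reachable u v) :
    v = u := by
  obtain ⟨p⟩ := huv
  cases p with
  | nil => rfl
  | cons hadj _ => exact absurd hadj.2.1 (not_or.mpr hu)

theorem KempeStep.exists_perm_of_twoColorConnected {G : SimpleGraph V} {c c' : V → Fin k}
    (hc : TwoColorConnected G c) (hstep : KempeStep G c c') :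
    ∃ σ : Equiv.Perm (Fin k), c' = σ ∘ c := by
  obtain ⟨i, j, hij, v₀, hswap, hfix⟩ := hstep
  have hkeep : ∀ v, c v ≠ i → c v ≠ j → c' v = c v := fun v hvi hvj => by
    by_cases hr : (twoColorSub G c i j).Reachable v₀ v
    · exact (hswap v hr).2.2 hvi hvj
    · exact hfix v hr
  by_cases hv₀ : c v₀ = i ∨ c v₀ = j
  · refine ⟨Equiv.swap i j, funext fun v => ?_⟩
    by_cases hv : c v = i ∨ c v = j
    · have hr := twoColorSub_reachable_of_preconnected (hc i j hij).preconnected hv₀ hv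
      rcases hv with hvi | hvj
      · simp [hvi, (hswap v hr).1 hvi]
      · simp [hvj, (hswap v hr).2.1 hvj]
    · obtain ⟨hvi, hvj⟩ := not_or.mp hv
      simp [hkeep v hvi hvj, Equiv.swap_apply_of_ne_of_ne hvi hvj]
  · -- a Kempe chain based at a vertex of a third color is that vertex alone
    replace hv₀ := not_or.mp hv₀
    refine ⟨1, funext fun v => ?_⟩
    by_cases hr : (twoColorSub G c i j).Reachable v₀ v
    · obtain rfl := eq_of_twoColorSub_reachable hv₀ hr
      exact hkeep v hv₀.1 hv₀.2
    · exact hfix v hr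

theorem KempeEquiv.exists_perm_of_twoColorConnected {G : SimpleGraph V} {c c' : V → Fin k}
    (hc : TwoColorConnected G c) (h : KempeEquiv G c c') :
    ∃ σ : Equiv.Perm (Fin k), c' = σ ∘ c := by
  induction h with
  | refl => exact ⟨1, rfl⟩
  | tail _ hstep ih =>
    obtain ⟨σ, rfl⟩ := ih
    obtain ⟨τ, rfl⟩ := hstep.exists_perm_of_twoColorConnected (hc.perm_comp σ)
    exact ⟨τ * σ, rfl⟩

theorem KempeEquiv.twoColorConnected {G : SimpleGraph V} {c c' : V → Fin k}
    (hc : TwoColorConnected G c) (h : KempeEquiv G c c') : TwoColorConnected G c' := by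
  obtain ⟨σ, rfl⟩ := h.exists_perm_of_twoColorConnected hc
  exact hc.perm_comp σ

end KempeChange

theorem not_kempe_equiv_of_connected_components_general {V : Type*}
    (G : SimpleGraph V) (k : ℕ) (c c' : V → Fin k)
    (hconn : ∀ i j : Fin k, i ≠ j →
      (G.induce {v : V | c v = i ∨ c v = j}).Connected)
    (hdisc : ∃ i j : Fin k, i ≠ j ∧
      ¬ (G.induce {v : V | c' v = i ∨ c' v = j}).Connected) :
    ¬ KempeEquiv G c c' := by
  intro hK
  obtain ⟨i, j, hij, hnc⟩ := hdisc
  exact hnc (hK.twoColorConnected hconn i j hij)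

/-- If under `c` every two-color induced subgraph is connected, while
under `c'` some two-color induced subgraph is disconnected, then `c` and `c'` are
not Kempe equivalent. -/
theorem not_kempe_equiv_of_connected_components {V : Type*} [Fintype V]
    (G : SimpleGraph V) (k : ℕ) (c c' : V → Fin k)
    (hc : IsProperColoring G k c) (hc' : IsProperColoring G k c')
    (hconn : ∀ i j : Fin k, i ≠ j →
      (G.induce {v : V | c v = i ∨ c v = j}).Connected)
    (hdisc : ∃ i j : Fin k, i ≠ j ∧
      ¬ (G.induce {v : V | c' v = i ∨ c' v = j}).Connected) :
    ¬ KempeEquiv G c c' :=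
  not_kempe_equiv_of_connected_components_general G k c c' hconn hdisc
end

section
/- If a properly colored graph G admits a coloring c such that for all colors i ≠ j the subgraph G(i,j) induced by vertices of colors i and j is connected, then every coloring obtained from c by a sequence of Kempe changes induces the same partition of V(G) into color classes as c (up to a permutation of the colors). -/
open SimpleGraph

variable {V : Type*}

variable {G : SimpleGraph V} {k : ℕ}

lemma reachable_twoColorSub_of_preconnected {c : V → Fin k} {i j : Fin k}
    (hconn : (G.induce {v : V | c v = i ∨ c v = j}).Preconnected) {u v : V}
    (hu : c u = i ∨ c u = j) (hv : c v = i ∨ c v = j) :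
    (twoColorSub G c i j).Reachable u v :=
  let f : G.induce {v : V | c v = i ∨ c v = j} →g twoColorSub G c i j :=
    { toFun := Subtype.val
      map_rel' := fun {a b} hab => ⟨hab, a.2, b.2⟩ }
  (hconn ⟨u, hu⟩ ⟨v, hv⟩).map f

lemma eq_of_reachable_twoColorSub {c : V → Fin k} {i j : Fin k} {u v : V}
    (hi : c u ≠ i) (hj : c u ≠ j) (huv : (twoColorSub G c i j).Reachable u v) :
    v = u := by
  obtain ⟨_ | ⟨hadj, _⟩⟩ := huv
  · rfl
  · exact (hadj.2.1.elim hi hj).elim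

lemma connected_induce_twoColor_perm_comp {c : V → Fin k}
    (hconn : ∀ i j : Fin k, i ≠ j → (G.induce {v : V | c v = i ∨ c v = j}).Connected)
    (π : Equiv.Perm (Fin k)) :
    ∀ i j : Fin k, i ≠ j → (G.induce {v : V | (π ∘ c) v = i ∨ (π ∘ c) v = j}).Connected := by
  intro i j hij
  have hset : {v : V | (π ∘ c) v = i ∨ (π ∘ c) v = j} =
      {v : V | c v = π.symm i ∨ c v = π.symm j} := by
    ext v
    simp only [Set.mem_ofPred_eq, Function.comp_apply, Equiv.eq_symm_apply]
  rw [hset]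
  exact hconn _ _ (π.symm.injective.ne hij)

/-- When every two-colour subgraph of `c` is connected, a Kempe chain is either a single vertex
outside the two colours (and the change does nothing) or a whole two-colour subgraph (and the
change swaps two colour classes). -/
lemma KempeStep.exists_perm_comp {c d : V → Fin k}
    (hconn : ∀ i j : Fin k, i ≠ j → (G.induce {v : V | c v = i ∨ c v = j}).Connected)
    (hstep : KempeStep G c d) : ∃ σ : Equiv.Perm (Fin k), d = σ ∘ c := by
  obtain ⟨i, j, hij, v₀, hswap, hfix⟩ := hstep
  by_cases h₀ : c v₀ = i ∨ c v₀ = j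
  · refine ⟨Equiv.swap i j, funext fun v => ?_⟩
    by_cases hv : c v = i ∨ c v = j
    · obtain ⟨hvi, hvj, -⟩ :=
        hswap v (reachable_twoColorSub_of_preconnected (hconn i j hij).preconnected h₀ hv)
      rcases hv with hv | hv
      · rw [Function.comp_apply, hv, Equiv.swap_apply_left, hvi hv]
      · rw [Function.comp_apply, hv, Equiv.swap_apply_right, hvj hv]
    · push Not at hv
      have hunreach : ¬ (twoColorSub G c i j).Reachable v₀ v := fun hr => by
        obtain rfl := eq_of_reachable_twoColorSub hv.1 hv.2 hr.symm
        exact h₀.elim hv.1 hv.2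
      rw [Function.comp_apply, Equiv.swap_apply_of_ne_of_ne hv.1 hv.2, hfix v hunreach]
  · push Not at h₀
    refine ⟨1, funext fun v => ?_⟩
    by_cases hr : (twoColorSub G c i j).Reachable v₀ v
    · obtain rfl := eq_of_reachable_twoColorSub h₀.1 h₀.2 hr
      exact (hswap v hr).2.2 h₀.1 h₀.2
    · exact hfix v hr

theorem kempe_equiv_partition_invariant_general {V : Type*} (G : SimpleGraph V) (k : ℕ)
    (c : V → Fin k)
    (hconn : ∀ i j : Fin k, i ≠ j →
      (G.induce {v : V | c v = i ∨ c v = j}).Connected)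
    (c' : V → Fin k) (h : KempeEquiv G c c') :
    ∃ π : Equiv.Perm (Fin k), c' = π ∘ c := by
  induction h with
  | refl => exact ⟨1, rfl⟩
  | tail _ hstep ih =>
    obtain ⟨π, rfl⟩ := ih
    obtain ⟨σ, rfl⟩ := hstep.exists_perm_comp (connected_induce_twoColor_perm_comp hconn π)
    exact ⟨σ * π, rfl⟩

/-- If under `c` all two-color induced subgraphs are connected, then
every coloring obtained from `c` by Kempe changes induces the same partition of
the vertices into color classes, up to a permutation of the colors. -/
theorem kempe_equiv_partition_invariant {V : Type*} (G : SimpleGraph V) (k : ℕ)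
    (c : V → Fin k) (hc : IsProperColoring G k c)
    (hconn : ∀ i j : Fin k, i ≠ j →
      (G.induce {v : V | c v = i ∨ c v = j}).Connected)
    (c' : V → Fin k) (h : KempeEquiv G c c') :
    ∃ π : Equiv.Perm (Fin k), c' = π ∘ c :=
  kempe_equiv_partition_invariant_general G k c hconn c' h
end

section
/- Let G be a graph obtained from a bipartite graph with parts S and T by adding extra edges inside the parts, properly k-colored so that color i does not appear on S, and suppose no added edge inside T is an (i,j)-edge. Then the coloring is Kempe equivalent to a k-coloring in which color j does not appear on T. -/
open SimpleGraph

variable {V : Type*}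

/-!
Every `j`-colored vertex `v` of `T` has no `i`-colored neighbour: its neighbours in `S`
avoid `i` by assumption, and its neighbours in `T` are joined to it by added edges, which
are not `(i,j)`-edges. So `v` is an isolated vertex of the `(i,j)`-subgraph, and the Kempe
change at `v` just recolors it `i`. These vertices form an independent set, so recoloring
them one at a time keeps each of the others isolated.
-/

lemma SimpleGraph.Reachable.eq_of_forall_not_adj {G : SimpleGraph V} {u v : V}
    (h : G.Reachable u v) (hu : ∀ w, ¬ G.Adj u w) : u = v := by
  by_contra huv
  obtain ⟨w, hw⟩ := h.nonempty_neighborSet_left huv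
  exact hu w hw

section Recolor

variable [DecidableEq V] {G : SimpleGraph V} {k : ℕ} {c : V → Fin k} {i j : Fin k}

lemma kempeStep_update_of_forall_adj_ne (hc : IsProperColoring G k c) (hij : i ≠ j)
    {v₀ : V} (hv₀ : c v₀ = j) (hnbr : ∀ w, G.Adj v₀ w → c w ≠ i) :
    KempeStep G c (Function.update c v₀ i) := by
  have hiso : ∀ w, ¬ (twoColorSub G c i j).Adj v₀ w := by
    rintro w ⟨hadj, -, hwi | hwj⟩
    · exact hnbr w hadj hwi
    · exact hc hadj (hv₀.trans hwj.symm)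
  refine ⟨i, j, hij, v₀, fun v hv => ?_, fun v hv => ?_⟩
  · obtain rfl := hv.eq_of_forall_not_adj hiso
    simp [hv₀, hij.symm]
  · exact Function.update_of_ne (by rintro rfl; exact hv (Reachable.refl _)) _ _

variable {A : Finset V}

lemma isProperColoring_piecewise (hc : IsProperColoring G k c) (hA : ∀ v ∈ A, c v = j)
    (hnbr : ∀ v ∈ A, ∀ w, G.Adj v w → c w ≠ i) :
    IsProperColoring G k (A.piecewise (fun _ => i) c) := by
  intro u v hadj
  by_cases hu : u ∈ A <;> by_cases hv : v ∈ A <;>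
    simp only [Finset.piecewise_eq_of_mem, Finset.piecewise_eq_of_notMem, hu, hv,
      not_false_eq_true]
  · exact fun _ => hc hadj ((hA u hu).trans (hA v hv).symm)
  · exact (hnbr u hu v hadj).symm
  · exact hnbr v hv u hadj.symm
  · exact hc hadj

lemma kempeEquiv_piecewise (hc : IsProperColoring G k c) (hij : i ≠ j)
    (hA : ∀ v ∈ A, c v = j) (hnbr : ∀ v ∈ A, ∀ w, G.Adj v w → c w ≠ i) :
    KempeEquiv G c (A.piecewise (fun _ => i) c) := by
  induction A using Finset.induction_on with
  | empty => rw [Finset.piecewise_empty]; exact Relation.ReflTransGen.refl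
  | insert a A ha ih =>
    have hA' : ∀ v ∈ A, c v = j := fun v hv => hA v (Finset.mem_insert_of_mem hv)
    have hnbr' : ∀ v ∈ A, ∀ w, G.Adj v w → c w ≠ i :=
      fun v hv => hnbr v (Finset.mem_insert_of_mem hv)
    have hcA := isProperColoring_piecewise hc hA' hnbr'
    rw [Finset.piecewise_insert]
    refine (ih hA' hnbr').tail (kempeStep_update_of_forall_adj_ne hcA hij ?_ fun w hw => ?_)
    · rw [Finset.piecewise_eq_of_notMem _ _ _ ha, hA a (Finset.mem_insert_self a A)]
    · have hwA : w ∉ A := fun hwA => hc (G.adj_symm hw) <| by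
        rw [hA' w hwA, hA a (Finset.mem_insert_self a A)]
      rw [Finset.piecewise_eq_of_notMem _ _ _ hwA]
      exact hnbr a (Finset.mem_insert_self a A) w (by simpa [ha, hwA] using hw)

end Recolor

/-- If color `i` does not appear on `S` and no added edge inside
`T = Sᶜ` is an `(i,j)`-edge, then the coloring is Kempe equivalent to one in
which color `j` does not appear on `T`. -/
theorem kempe_equiv_avoid_color_on_T {V : Type*} [Fintype V]
    (G : SimpleGraph V) (S : Set V) (H : SimpleGraph V) (hBE : IsBPlusE G S H)
    (k : ℕ) (i j : Fin k) (hij : i ≠ j)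
    (c : V → Fin k) (hc : IsProperColoring G k c)
    (hS : ∀ v ∈ S, c v ≠ i)
    (hno : ∀ u v : V, H.Adj u v → u ∉ S → v ∉ S →
      ¬ ((c u = i ∧ c v = j) ∨ (c u = j ∧ c v = i))) :
    ∃ c' : V → Fin k, KempeEquiv G c c' ∧ IsProperColoring G k c' ∧
      (∀ v ∉ S, c' v ≠ j) := by
  classical
  set A := Finset.univ.filter fun v => v ∉ S ∧ c v = j
  have hA : ∀ v ∈ A, c v = j := fun v hv => (Finset.mem_filter.1 hv).2.2
  have hnbr : ∀ v ∈ A, ∀ w, G.Adj v w → c w ≠ i := by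
    intro v hv w hvw hwi
    obtain ⟨-, hvS, hvj⟩ := Finset.mem_filter.1 hv
    by_cases hH : H.Adj v w
    · exact hno v w hH hvS (fun hwS => hvS ((hBE.2.2 v w hH).2 hwS)) (.inr ⟨hvj, hwi⟩)
    · exact hS w ((hBE.2.1 v w hvw hH).not_left.1 hvS) hwi
  refine ⟨A.piecewise (fun _ => i) c, kempeEquiv_piecewise hc hij hA hnbr,
    isProperColoring_piecewise hc hA hnbr, fun v hvS hvj => ?_⟩
  by_cases hv : v ∈ A
  · exact hij (by rwa [Finset.piecewise_eq_of_mem _ _ _ hv] at hvj)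
  · exact hv (Finset.mem_filter.2 ⟨Finset.mem_univ v, hvS, by
      rwa [Finset.piecewise_eq_of_notMem _ _ _ hv] at hvj⟩)
end

section
/- Let G be a connected graph and let G** be the graph obtained from G by the following construction: for each vertex v of G take an independent set I_v of size deg_G(v) (the sets I_v pairwise disjoint); for each edge uv of G place one edge between I_u and I_v so that these edges form a perfect matching on the union of the I_v's; then for each v add two adjacent new vertices x_v and y_v joined to every vertex of I_v. Then every two proper 4-colorings of G** are Kempe equivalent. -/
open SimpleGraph

variable {V : Type*}

/-- The graph `G**` of Chen et al.: for each vertex `v` of `G` take the independent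
set `I_v` of darts of `G` starting at `v` (so `|I_v| = deg v`); the darts `d` and
`d.symm` are matched, giving one edge between `I_u` and `I_v` for each edge `uv`
of `G`, and these edges form a perfect matching on the darts; finally two adjacent
new vertices `x_v = (v,0)` and `y_v = (v,1)` are joined to every vertex of `I_v`. -/
def doubleStar {V : Type*} (G : SimpleGraph V) :
    SimpleGraph (G.Dart ⊕ V × Fin 2) :=
  SimpleGraph.fromRel (fun a b =>
    (∃ d : G.Dart, a = Sum.inl d ∧ b = Sum.inl d.symm) ∨
    (∃ (d : G.Dart) (p : V × Fin 2), a = Sum.inl d ∧ b = Sum.inr p ∧ d.fst = p.1) ∨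
    (∃ v : V, a = Sum.inr (v, 0) ∧ b = Sum.inr (v, 1)))

/-! `G**` is `3`-degenerate: a vertex of `I_v` has exactly three neighbours (its partner in the
matching, `x_v` and `y_v`), and once `I_v` is gone `x_v` and `y_v` only see each other. By the
theorem of Las Vergnas and Meyniel, all `k`-colourings of a finite `d`-degenerate graph `H` with
`d < k` are Kempe equivalent. To prove it, remove a vertex `v` with fewer than `k` neighbours and
lift every Kempe change of `H - v` to `H`. If `v` has two neighbours in the relevant two-coloured
subgraph, these use only the two swapped colours, so `v` can first be recoloured with a colour
outside the pair; afterwards `v` cannot merge two-coloured components, and the change lifts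
verbatim. A last recolouring of `v` finishes the induction. -/

open Finset

namespace SimpleGraph

variable {k : ℕ}

open Classical in
noncomputable def kempeSwap (G : SimpleGraph V) (c : V → Fin k) (i j : Fin k) (v₀ : V) :
    V → Fin k :=
  fun w => if (twoColorSub G c i j).Reachable v₀ w then Equiv.swap i j (c w) else c w

variable {G : SimpleGraph V} {c : V → Fin k} {i j : Fin k} {v₀ w : V}

lemma kempeSwap_apply_of_reachable (h : (twoColorSub G c i j).Reachable v₀ w) :
    G.kempeSwap c i j v₀ w = Equiv.swap i j (c w) := by
  simp [kempeSwap, h]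

lemma kempeSwap_apply_of_not_reachable (h : ¬ (twoColorSub G c i j).Reachable v₀ w) :
    G.kempeSwap c i j v₀ w = c w := by
  simp [kempeSwap, h]

lemma kempeStep_iff_exists_kempeSwap {c' : V → Fin k} :
    KempeStep G c c' ↔ ∃ i j, i ≠ j ∧ ∃ v₀, c' = G.kempeSwap c i j v₀ := by
  refine exists₂_congr fun i j => and_congr_right fun _ => exists_congr fun v₀ => ?_
  constructor
  · rintro ⟨hR, hNR⟩
    funext w
    by_cases hw : (twoColorSub G c i j).Reachable v₀ w
    · obtain ⟨hi, hj, ho⟩ := hR w hw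
      rw [kempeSwap_apply_of_reachable hw, Equiv.swap_apply_def]
      split_ifs with h₁ h₂
      exacts [hi h₁, hj h₂, ho h₁ h₂]
    · rw [kempeSwap_apply_of_not_reachable hw, hNR w hw]
  · rintro rfl
    refine ⟨fun w hw => ?_, fun w hw => kempeSwap_apply_of_not_reachable hw⟩
    rw [kempeSwap_apply_of_reachable hw]
    exact ⟨fun h => by simp [h], fun h => by simp [h], Equiv.swap_apply_of_ne_of_ne⟩

lemma _root_.IsProperColoring.mono {G' : SimpleGraph V} (hle : G' ≤ G)
    (hc : IsProperColoring G k c) : IsProperColoring G' k c :=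
  fun _ _ h => hc (hle h)

lemma _root_.IsProperColoring.kempeSwap (hc : IsProperColoring G k c) (i j : Fin k) (v₀ : V) :
    IsProperColoring G k (G.kempeSwap c i j v₀) := by
  have cross : ∀ ⦃u w⦄, G.Adj u w → (twoColorSub G c i j).Reachable v₀ u →
      ¬ (twoColorSub G c i j).Reachable v₀ w → Equiv.swap i j (c u) ≠ c w := by
    intro u w huw hu hw heq
    by_cases hij : c u = i ∨ c u = j
    · have hw' : c w = i ∨ c w = j := by
        rcases hij with h | h <;> simp [← heq, h]
      exact hw (hu.trans (Adj.reachable ⟨huw, hij, hw'⟩))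
    · push Not at hij
      exact hc huw (by rwa [Equiv.swap_apply_of_ne_of_ne hij.1 hij.2] at heq)
  intro u w huw
  by_cases hu : (twoColorSub G c i j).Reachable v₀ u <;>
    by_cases hw : (twoColorSub G c i j).Reachable v₀ w
  · simpa [kempeSwap_apply_of_reachable, hu, hw] using hc huw
  · simpa [kempeSwap_apply_of_reachable hu, kempeSwap_apply_of_not_reachable hw]
      using cross huw hu hw
  · simpa [kempeSwap_apply_of_reachable hw, kempeSwap_apply_of_not_reachable hu]
      using (cross huw.symm hw hu).symm
  · simpa [kempeSwap_apply_of_not_reachable, hu, hw] using hc huw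

lemma _root_.KempeEquiv.isProperColoring {c' : V → Fin k} (h : KempeEquiv G c c')
    (hc : IsProperColoring G k c) : IsProperColoring G k c' := by
  unfold KempeEquiv at h
  induction h with
  | refl => exact hc
  | tail _ hstep ih =>
    obtain ⟨i, j, -, v₀, rfl⟩ := kempeStep_iff_exists_kempeSwap.1 hstep
    exact ih.kempeSwap i j v₀

lemma eq_of_reachable_of_forall_not_adj {P : SimpleGraph V} {v w : V} (hv : ∀ u, ¬ P.Adj v u)
    (h : P.Reachable v w) : w = v := by
  obtain ⟨p⟩ := h
  cases p with
  | nil => rfl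
  | cons ha _ => exact absurd ha (hv _)

lemma reachable_iff_of_subsingleton_neighborSet {P Q : SimpleGraph V} {v : V} (hPQ : P ≤ Q)
    (hQP : ∀ ⦃a b⦄, Q.Adj a b → a ≠ v → b ≠ v → P.Adj a b) (hv : (Q.neighborSet v).Subsingleton)
    {a w : V} (ha : a ≠ v) (hw : w ≠ v) : Q.Reachable a w ↔ P.Reachable a w := by
  refine ⟨fun ⟨p⟩ => ?_, fun h => h.mono hPQ⟩
  -- A walk that enters `v` must leave it through the same (unique) neighbour.
  suffices key : ∀ {a w} (p : Q.Walk a w), w ≠ v → ∀ u, u ≠ v → (u = a ∨ (a = v ∧ Q.Adj v u)) →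
      P.Reachable u w from key p hw a ha (Or.inl rfl)
  intro a w p hw
  induction p with
  | nil => rintro u - (rfl | ⟨rfl, -⟩); exacts [Reachable.refl _, absurd rfl hw]
  | @cons a b _ hab q ih =>
    rintro u hu (rfl | ⟨rfl, hvu⟩)
    · by_cases hb : b = v
      · subst hb
        exact ih hw u hu (Or.inr ⟨rfl, hab.symm⟩)
      · exact (hQP hab hu hb).reachable.trans (ih hw b hb (Or.inl rfl))
    · exact ih hw u hu (Or.inl (hv hvu hab))

lemma exists_color_ne_of_card_lt {N : Finset V} {b₁ b₂ : V} (hN : #N < k) (h₁ : b₁ ∈ N)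
    (h₂ : b₂ ∈ N) (hb : b₁ ≠ b₂) (hc₁ : c b₁ = i ∨ c b₁ = j) (hc₂ : c b₂ = i ∨ c b₂ = j) :
    ∃ m, m ≠ i ∧ m ≠ j ∧ ∀ u ∈ N, c u ≠ m := by
  classical
  set S := ((N.erase b₁).erase b₂).image c
  have hS : #S < #(univ \ {i, j}) := by
    have := card_erase_add_one h₁
    have := card_erase_add_one (mem_erase.2 ⟨hb.symm, h₂⟩)
    have := card_le_two (a := i) (b := j)
    calc #S ≤ #((N.erase b₁).erase b₂) := card_image_le
      _ < #(univ : Finset (Fin k)) - #{i, j} := by rw [card_univ, Fintype.card_fin]; omega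
      _ ≤ #(univ \ {i, j}) := le_card_sdiff _ _
  obtain ⟨m, hm, hmS⟩ := exists_mem_notMem_of_card_lt_card hS
  simp only [mem_sdiff, mem_univ, mem_insert, mem_singleton, true_and, not_or] at hm
  refine ⟨m, hm.1, hm.2, fun u hu hum => ?_⟩
  by_cases hu₁ : u = b₁
  · subst hu₁; rcases hc₁ with h | h <;> simp_all
  by_cases hu₂ : u = b₂
  · subst hu₂; rcases hc₂ with h | h <;> simp_all
  exact hmS (hum ▸ mem_image_of_mem c (mem_erase.2 ⟨hu₂, mem_erase.2 ⟨hu₁, hu⟩⟩))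

lemma kempeEquiv_update [DecidableEq V] (hc : IsProperColoring G k c) {v : V} {m : Fin k}
    (hm : ∀ u, G.Adj v u → c u ≠ m) : KempeEquiv G c (Function.update c v m) := by
  by_cases hcv : c v = m
  · rw [← hcv, Function.update_eq_self]
    exact Relation.ReflTransGen.refl
  refine .single (kempeStep_iff_exists_kempeSwap.2 ⟨c v, m, hcv, v, funext fun w => ?_⟩)
  have hiso : ∀ u, ¬ (twoColorSub G c (c v) m).Adj v u := by
    rintro u ⟨hvu, -, hu | hu⟩
    exacts [hc hvu hu.symm, hm u hvu hu]
  by_cases hw : w = v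
  · subst hw
    simp [kempeSwap_apply_of_reachable (Reachable.refl _)]
  · rw [kempeSwap_apply_of_not_reachable fun h => hw (eq_of_reachable_of_forall_not_adj hiso h),
      Function.update_of_ne hw]

variable {v : V} {N : Finset V}

lemma exists_kempeEquiv_subsingleton_neighborSet (hc : IsProperColoring G k c)
    (hN : ∀ u, G.Adj v u → u ∈ N) (hNk : #N < k) (i j : Fin k) :
    ∃ c₁, KempeEquiv G c c₁ ∧ (∀ w ≠ v, c₁ w = c w) ∧
      ((twoColorSub G c₁ i j).neighborSet v).Subsingleton := by
  classical
  by_cases hs : ((twoColorSub G c i j).neighborSet v).Subsingleton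
  · exact ⟨c, Relation.ReflTransGen.refl, fun _ _ => rfl, hs⟩
  obtain ⟨b₁, hb₁, b₂, hb₂, hb⟩ := Set.not_subsingleton_iff.1 hs
  obtain ⟨m, hmi, hmj, hm⟩ :=
    exists_color_ne_of_card_lt hNk (hN _ hb₁.1) (hN _ hb₂.1) hb hb₁.2.2 hb₂.2.2
  refine ⟨Function.update c v m, kempeEquiv_update hc fun u hu => hm u (hN u hu),
    fun w hw => Function.update_of_ne hw _ _, ?_⟩
  rintro b ⟨-, h, -⟩
  simp [hmi, hmj] at h

lemma exists_kempeEquiv_lift_kempeStep (hN : ∀ u, G.Adj v u → u ∈ N) (hNk : #N < k)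
    {x y z : V → Fin k} (hz : IsProperColoring G k z) (hzx : ∀ w ≠ v, z w = x w)
    (hxy : KempeStep (G.deleteIncidenceSet v) x y) :
    ∃ z', KempeEquiv G z z' ∧ ∀ w ≠ v, z' w = y w := by
  obtain ⟨i, j, hij, v₀, rfl⟩ := kempeStep_iff_exists_kempeSwap.1 hxy
  by_cases hv₀ : v₀ = v
  · subst hv₀
    have hiso : ∀ u, ¬ (twoColorSub (G.deleteIncidenceSet v₀) x i j).Adj v₀ u :=
      fun u hu => (deleteIncidenceSet_adj.1 hu.1).2.1 rfl
    refine ⟨z, Relation.ReflTransGen.refl, fun w hw => ?_⟩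
    rw [kempeSwap_apply_of_not_reachable fun h => hw (eq_of_reachable_of_forall_not_adj hiso h),
      hzx w hw]
  obtain ⟨z₁, hzz₁, hz₁z, hsub⟩ := exists_kempeEquiv_subsingleton_neighborSet hz hN hNk i j
  have hx : ∀ w ≠ v, z₁ w = x w := fun w hw => (hz₁z w hw).trans (hzx w hw)
  refine ⟨G.kempeSwap z₁ i j v₀,
    hzz₁.tail (kempeStep_iff_exists_kempeSwap.2 ⟨i, j, hij, v₀, rfl⟩), fun w hw => ?_⟩
  have hreach : (twoColorSub G z₁ i j).Reachable v₀ w ↔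
      (twoColorSub (G.deleteIncidenceSet v) x i j).Reachable v₀ w := by
    refine reachable_iff_of_subsingleton_neighborSet ?_ ?_ hsub hv₀ hw
    · rintro a b ⟨hab, ha, hb⟩
      obtain ⟨hab, hav, hbv⟩ := deleteIncidenceSet_adj.1 hab
      exact ⟨hab, hx a hav ▸ ha, hx b hbv ▸ hb⟩
    · rintro a b ⟨hab, ha, hb⟩ hav hbv
      exact ⟨deleteIncidenceSet_adj.2 ⟨hab, hav, hbv⟩, hx a hav ▸ ha, hx b hbv ▸ hb⟩
  by_cases hr : (twoColorSub G z₁ i j).Reachable v₀ w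
  · rw [kempeSwap_apply_of_reachable hr, kempeSwap_apply_of_reachable (hreach.1 hr), hx w hw]
  · rw [kempeSwap_apply_of_not_reachable hr, kempeSwap_apply_of_not_reachable (mt hreach.2 hr),
      hx w hw]

lemma exists_kempeEquiv_lift (hN : ∀ u, G.Adj v u → u ∈ N) (hNk : #N < k) {x y : V → Fin k}
    (hxy : KempeEquiv (G.deleteIncidenceSet v) x y) {z : V → Fin k}
    (hz : IsProperColoring G k z) (hzx : ∀ w ≠ v, z w = x w) :
    ∃ z', KempeEquiv G z z' ∧ ∀ w ≠ v, z' w = y w := by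
  unfold KempeEquiv at hxy
  induction hxy with
  | refl => exact ⟨z, Relation.ReflTransGen.refl, hzx⟩
  | tail _ hstep ih =>
    obtain ⟨z₁, hzz₁, hz₁⟩ := ih
    obtain ⟨z₂, hz₁z₂, hz₂⟩ :=
      exists_kempeEquiv_lift_kempeStep hN hNk (hzz₁.isProperColoring hz) hz₁ hstep
    exact ⟨z₂, hzz₁.trans hz₁z₂, hz₂⟩

lemma kempeEquiv_of_kempeEquiv_deleteIncidenceSet [DecidableEq V] (hN : ∀ u, G.Adj v u → u ∈ N)
    (hNk : #N < k) {c c' : V → Fin k} (hc : IsProperColoring G k c)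
    (hc' : IsProperColoring G k c')
    (h : KempeEquiv (G.deleteIncidenceSet v) c (Function.update c' v (c v))) :
    KempeEquiv G c c' := by
  obtain ⟨z, hcz, hz⟩ := exists_kempeEquiv_lift hN hNk h hc fun _ _ => rfl
  have hzc' : ∀ w ≠ v, z w = c' w := fun w hw => (hz w hw).trans (Function.update_of_ne hw _ _)
  have hupdate : Function.update z v (c' v) = c' := by
    funext w
    by_cases hw : w = v
    · subst hw; simp
    · rw [Function.update_of_ne hw, hzc' w hw]
  rw [← hupdate]
  exact hcz.trans (kempeEquiv_update (hcz.isProperColoring hc)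
    fun u hu => (hzc' u hu.ne').trans_ne (hc' hu.symm))

def inducedOn (H : SimpleGraph V) (A : Finset V) : SimpleGraph V where
  Adj a b := H.Adj a b ∧ a ∈ A ∧ b ∈ A
  symm := ⟨fun _ _ h => ⟨h.1.symm, h.2.2, h.2.1⟩⟩
  loopless := ⟨fun a h => H.loopless.irrefl a h.1⟩

lemma inducedOn_univ [Fintype V] (H : SimpleGraph V) : H.inducedOn univ = H := by
  ext
  simp [inducedOn]

lemma inducedOn_erase [DecidableEq V] (H : SimpleGraph V) (A : Finset V) (v : V) :
    H.inducedOn (A.erase v) = (H.inducedOn A).deleteIncidenceSet v := by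
  ext a b
  simp only [inducedOn, deleteIncidenceSet_adj, mem_erase]
  tauto

/-- `d`-degeneracy. The neighbours of `v` in `A` are bounded by a finset `N` rather than counted,
so that no decidability of adjacency is needed. -/
def IsDegenerate (H : SimpleGraph V) (d : ℕ) : Prop :=
  ∀ A : Finset V, A.Nonempty → ∃ v ∈ A, ∃ N : Finset V, #N ≤ d ∧ ∀ u ∈ A, H.Adj v u → u ∈ N

lemma kempeEquiv_inducedOn [DecidableEq V] {H : SimpleGraph V} {d : ℕ} (hH : H.IsDegenerate d)
    (hdk : d < k) (A : Finset V) {c c' : V → Fin k} (hc : IsProperColoring (H.inducedOn A) k c)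
    (hc' : IsProperColoring (H.inducedOn A) k c') (hcc' : ∀ w ∉ A, c w = c' w) :
    KempeEquiv (H.inducedOn A) c c' := by
  induction A using Finset.strongInduction generalizing c c' with
  | H A ih =>
  rcases A.eq_empty_or_nonempty with rfl | hA
  · obtain rfl : c = c' := funext fun w => hcc' w (notMem_empty w)
    exact Relation.ReflTransGen.refl
  obtain ⟨v, hv, N, hNd, hN⟩ := hH A hA
  have hG' := H.inducedOn_erase A v
  refine kempeEquiv_of_kempeEquiv_deleteIncidenceSet (G := H.inducedOn A)
    (fun u hu => hN u hu.2.2 hu.1) (hNd.trans_lt hdk) hc hc' ?_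
  rw [← hG']
  refine ih _ (erase_ssubset hv) (hc.mono (hG' ▸ deleteIncidenceSet_le _ v)) ?_ fun w hw => ?_
  · rw [hG']
    intro a b hab
    obtain ⟨hab, hav, hbv⟩ := deleteIncidenceSet_adj.1 hab
    simpa [Function.update_of_ne hav, Function.update_of_ne hbv] using hc' hab
  · by_cases hwv : w = v
    · subst hwv; simp
    · rw [Function.update_of_ne hwv]
      exact hcc' w fun h => hw (mem_erase.2 ⟨hwv, h⟩)

theorem kempeEquiv_of_isDegenerate [Finite V] {H : SimpleGraph V} {d : ℕ} (hH : H.IsDegenerate d)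
    (hdk : d < k) {c c' : V → Fin k} (hc : IsProperColoring H k c)
    (hc' : IsProperColoring H k c') : KempeEquiv H c c' := by
  classical
  have := Fintype.ofFinite V
  rw [← H.inducedOn_univ] at hc hc' ⊢
  exact kempeEquiv_inducedOn hH hdk univ hc hc' fun w hw => absurd (mem_univ w) hw

end SimpleGraph

lemma doubleStar_adj_inl {G : SimpleGraph V} {d : G.Dart} {u : G.Dart ⊕ V × Fin 2}
    (h : (doubleStar G).Adj (.inl d) u) :
    u = .inl d.symm ∨ u = .inr (d.fst, 0) ∨ u = .inr (d.fst, 1) := by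
  simp only [doubleStar, fromRel_adj, exists_and_left, Prod.exists, exists_and_right,
    Fin.exists_fin_two, exists_eq_right', ne_eq, Sum.inl.injEq, exists_eq_left', reduceCtorEq,
    false_and, exists_false, or_false, or_self, and_false] at h
  obtain ⟨-, h | ⟨d', rfl, rfl⟩⟩ := h
  · exact h
  · simp

lemma doubleStar_adj_inr_inr {G : SimpleGraph V} {p q : V × Fin 2}
    (h : (doubleStar G).Adj (.inr p) (.inr q)) : q.1 = p.1 := by
  simp only [doubleStar, fromRel_adj, exists_and_left, Prod.exists, exists_and_right,
    Fin.exists_fin_two, exists_eq_right', ne_eq, Sum.inr.injEq, reduceCtorEq, and_self,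
    exists_false, false_and, false_or] at h
  rcases h with ⟨-, ⟨v, rfl, rfl⟩ | ⟨v, rfl, rfl⟩⟩ <;> rfl

lemma doubleStar_isDegenerate (G : SimpleGraph V) : (doubleStar G).IsDegenerate 3 := by
  classical
  rintro A ⟨a, ha⟩
  by_cases hd : ∃ d : G.Dart, .inl d ∈ A
  · obtain ⟨d, hd⟩ := hd
    refine ⟨.inl d, hd, {Sum.inl d.symm, Sum.inr (d.fst, 0), Sum.inr (d.fst, 1)}, card_le_three,
      fun u _ hu => ?_⟩
    simpa using doubleStar_adj_inl hu
  push Not at hd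
  cases a with
  | inl d => exact absurd ha (hd d)
  | inr p =>
    refine ⟨.inr p, ha, {Sum.inr (p.1, 0), Sum.inr (p.1, 1)}, card_le_two.trans (by norm_num),
      fun u hu hpu => ?_⟩
    cases u with
    | inl d => exact absurd hu (hd d)
    | inr q =>
      obtain ⟨w, e⟩ := q
      obtain rfl : w = p.1 := doubleStar_adj_inr_inr hpu
      fin_cases e <;> simp

theorem kempe_equiv_doubleStar_general {V : Type*} [Fintype V] (G : SimpleGraph V)
    (c c' : G.Dart ⊕ V × Fin 2 → Fin 4)
    (hc : IsProperColoring (doubleStar G) 4 c)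
    (hc' : IsProperColoring (doubleStar G) 4 c') :
    KempeEquiv (doubleStar G) c c' := by
  classical
  exact kempeEquiv_of_isDegenerate (doubleStar_isDegenerate G) (by norm_num) hc hc'

/-- For every connected graph `G`, every two proper `4`-colorings of
`G**` are Kempe equivalent. -/
theorem kempe_equiv_doubleStar {V : Type*} [Fintype V] (G : SimpleGraph V)
    (hG : G.Connected)
    (c c' : G.Dart ⊕ V × Fin 2 → Fin 4)
    (hc : IsProperColoring (doubleStar G) 4 c)
    (hc' : IsProperColoring (doubleStar G) 4 c') :
    KempeEquiv (doubleStar G) c c' :=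
  kempe_equiv_doubleStar_general G c c' hc hc'
end
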